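/- Let F be a real 3×2 matrix with columns f₁, f₂ satisfying |f₁ × f₂| ≥ ε for some ε > 0, and let a₁, a₂ ∈ ℝ³ with |a₁|⁴ + |a₂|⁴ ≤ M. Then (1/|f₁ × f₂|)·(||f₁|² − |a₁|²|² + ||f₂|² − |a₂|²|²) ≥ (1/4)(|f₁|² + |f₂|²) − M/(2ε). -/
import Mathlib


open scoped BigOperators

/-- Squared Euclidean norm of a vector in ℝ³. -/
noncomputable def sqNorm3 (v : Fin 3 → ℝ) : ℝ := ∑ i, (v i) ^ 2

/-- Euclidean norm of a vector in ℝ³. -/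
noncomputable def norm3 (v : Fin 3 → ℝ) : ℝ := Real.sqrt (sqNorm3 v)

/-- Coercivity of the bulk energy density `W₁^ε`:  if the columns `f₁, f₂` of
`F ∈ ℝ^{3×2}` satisfy `|f₁ × f₂| ≥ ε > 0` and `a₁, a₂ ∈ ℝ³` satisfy
`|a₁|⁴ + |a₂|⁴ ≤ M`, then
`(1/|f₁ × f₂|)·(||f₁|² − |a₁|²|² + ||f₂|² − |a₂|²|²) ≥
  (1/4)(|f₁|² + |f₂|²) − M/(2ε)`. -/
theorem stmt_1 (ε M : ℝ) (hε : 0 < ε) (f₁ f₂ a₁ a₂ : Fin 3 → ℝ)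
    (hcross : ε ≤ norm3 (crossProduct f₁ f₂))
    (hM : (sqNorm3 a₁) ^ 2 + (sqNorm3 a₂) ^ 2 ≤ M) :
    (1 / norm3 (crossProduct f₁ f₂)) *
        ((sqNorm3 f₁ - sqNorm3 a₁) ^ 2 + (sqNorm3 f₂ - sqNorm3 a₂) ^ 2) ≥
      (1 / 4) * (sqNorm3 f₁ + sqNorm3 f₂) - M / (2 * ε) := by
  set c := norm3 (crossProduct f₁ f₂) with hc
  set x := sqNorm3 f₁ with hx
  set y := sqNorm3 f₂ with hy
  set a := sqNorm3 a₁ with ha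
  set b := sqNorm3 a₂ with hb
  have hcpos : 0 < c := lt_of_lt_of_le hε hcross
  have hxnn : 0 ≤ x := Finset.sum_nonneg fun i _ => sq_nonneg _
  have hynn : 0 ≤ y := Finset.sum_nonneg fun i _ => sq_nonneg _
  have hann : 0 ≤ a := Finset.sum_nonneg fun i _ => sq_nonneg _
  have hbnn : 0 ≤ b := Finset.sum_nonneg fun i _ => sq_nonneg _
  have hMnn : 0 ≤ M := le_trans (by positivity) hM
  -- Lagrange: c² ≤ x * y
  have hsq : c ^ 2 ≤ x * y := by
    have h1 : c ^ 2 = sqNorm3 (crossProduct f₁ f₂) := by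
      rw [hc, norm3, sq, Real.mul_self_sqrt]
      exact Finset.sum_nonneg fun i _ => sq_nonneg _
    rw [h1, hx, hy]
    simp only [sqNorm3, crossProduct, Fin.sum_univ_three]
    simp [Matrix.cons_val_zero, Matrix.cons_val_one]
    nlinarith [sq_nonneg (f₁ 0 * f₂ 0 + f₁ 1 * f₂ 1 + f₁ 2 * f₂ 2)]
  have hcle : c ≤ (x + y) / 2 := by
    nlinarith [sq_nonneg (x - y), sq_nonneg ((x + y) / 2 - c)]
  -- key pointwise bound
  have hS : (x - a) ^ 2 + (y - b) ^ 2 ≥ (x ^ 2 + y ^ 2) / 3 - M / 2 := by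
    nlinarith [sq_nonneg (2 * x - 3 * a), sq_nonneg (2 * y - 3 * b)]
  have hMc : M / 2 ≤ M / (2 * ε) * c := by
    rw [div_mul_eq_mul_div, div_le_div_iff₀ (by norm_num) (by positivity)]
    nlinarith
  rw [ge_iff_le, show (1 / c) * ((x - a) ^ 2 + (y - b) ^ 2)
      = ((x - a) ^ 2 + (y - b) ^ 2) / c from by ring, le_div_iff₀ hcpos]
  nlinarith [sq_nonneg (x - y), mul_le_mul_of_nonneg_left hcle (by positivity : (0:ℝ) ≤ (x + y) / 4)]
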